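/- For every assignment of states (occupied or vacant) to the squares of Λ = {1,…,m} × {1,…,n}, if Λ contains no occupied star connected left-right crossing, then Λ contains a vacant plus connected top-down crossing. -/

import Mathlib

/-- Star adjacency on squares of the array: share at least a corner. -/
def starAdj (i j : ℤ × ℤ) : Prop := max |i.1 - j.1| |i.2 - j.2| = 1

/-- Plus adjacency on squares of the array: share an edge. -/
def plusAdj (i j : ℤ × ℤ) : Prop := |i.1 - j.1| + |i.2 - j.2| = 1

/-- Membership in the rectangular array `Λ = {1,…,m} × {1,…,n}`. -/
def inRect (m n : ℤ) (k : ℤ × ℤ) : Prop :=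
  1 ≤ k.1 ∧ k.1 ≤ m ∧ 1 ≤ k.2 ∧ k.2 ≤ n

/-- A left-right crossing of `Λ = {1,…,m} × {1,…,n}` with respect to the adjacency
`adj`: a sequence of pairwise distinct squares of `Λ` with consecutive squares
adjacent, whose first square is the unique one with first coordinate `1` and whose
last square is the unique one with first coordinate `m`. -/
def IsLRCrossing (adj : ℤ × ℤ → ℤ × ℤ → Prop) (m n : ℤ) (J : List (ℤ × ℤ)) : Prop :=
  J ≠ [] ∧ J.Nodup ∧ J.Chain' adj ∧ (∀ k ∈ J, inRect m n k) ∧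
  (∀ k ∈ J, (k.1 = 1 ↔ J.head? = some k)) ∧
  (∀ k ∈ J, (k.1 = m ↔ J.getLast? = some k))

/-- A top-down crossing of `Λ = {1,…,m} × {1,…,n}` with respect to the adjacency
`adj`: a sequence of pairwise distinct squares of `Λ` with consecutive squares
adjacent, whose first square is the unique one with second coordinate `n` and whose
last square is the unique one with second coordinate `1`. -/
def IsTDCrossing (adj : ℤ × ℤ → ℤ × ℤ → Prop) (m n : ℤ) (J : List (ℤ × ℤ)) : Prop :=
  J ≠ [] ∧ J.Nodup ∧ J.Chain' adj ∧ (∀ k ∈ J, inRect m n k) ∧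
  (∀ k ∈ J, (k.2 = n ↔ J.head? = some k)) ∧
  (∀ k ∈ J, (k.2 = 1 ↔ J.getLast? = some k))

/-!
Pad the array with an occupied wall (columns `≤ 0`, rows `1, …, n`) and treat every square
above row `n` as vacant. Starting on the edge between the vacant square `(0, n + 1)` and the
occupied square `(0, n)`, walk along the interface keeping vacant squares on the left and
occupied squares on the right. The walk is reversible, and its starting state is entered from
the wall, so it never revisits a state and must leave every bounded region. While it stays
inside, the squares on its left form a vacant plus path from row `n + 1` and those on its
right an occupied star path from the wall; it can only leave by reaching row `1` on the left
(a vacant top-down crossing) or column `m` on the right (an occupied left-right crossing).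
-/

lemma plusAdj_iff {a b : ℤ × ℤ} :
    plusAdj a b ↔ (a.1 = b.1 ∧ (a.2 = b.2 + 1 ∨ b.2 = a.2 + 1)) ∨
      (a.2 = b.2 ∧ (a.1 = b.1 + 1 ∨ b.1 = a.1 + 1)) := by
  unfold plusAdj
  rcases abs_cases (a.1 - b.1) with ⟨h₁, h₁'⟩ | ⟨h₁, h₁'⟩ <;>
  rcases abs_cases (a.2 - b.2) with ⟨h₂, h₂'⟩ | ⟨h₂, h₂'⟩ <;> rw [h₁, h₂] <;> omega

lemma starAdj_iff {a b : ℤ × ℤ} :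
    starAdj a b ↔ a.1 ≤ b.1 + 1 ∧ b.1 ≤ a.1 + 1 ∧ a.2 ≤ b.2 + 1 ∧ b.2 ≤ a.2 + 1 ∧
      ¬(a.1 = b.1 ∧ a.2 = b.2) := by
  unfold starAdj
  rcases abs_cases (a.1 - b.1) with ⟨h₁, h₁'⟩ | ⟨h₁, h₁'⟩ <;>
  rcases abs_cases (a.2 - b.2) with ⟨h₂, h₂'⟩ | ⟨h₂, h₂'⟩ <;> rw [h₁, h₂] <;> omega

def plusGraph : SimpleGraph (ℤ × ℤ) where
  Adj := plusAdj
  symm := ⟨fun _ _ h => by rw [plusAdj_iff] at *; omega⟩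
  loopless := ⟨fun _ h => by rw [plusAdj_iff] at h; omega⟩

def starGraph : SimpleGraph (ℤ × ℤ) where
  Adj := starAdj
  symm := ⟨fun _ _ h => by rw [starAdj_iff] at *; omega⟩
  loopless := ⟨fun _ h => by rw [starAdj_iff] at h; omega⟩

namespace SimpleGraph

lemma exists_walk_support_subset_of_reflTransGen {V : Type*} {G : SimpleGraph V}
    {S : Set V} {u v : V} (hu : u ∈ S)
    (h : Relation.ReflTransGen (fun x y => G.Adj x y ∧ y ∈ S) u v) :
    ∃ w : G.Walk u v, ∀ z ∈ w.support, z ∈ S := by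
  induction h with
  | refl => exact ⟨.nil, by simpa using hu⟩
  | tail _ hyz ih =>
    obtain ⟨w, hw⟩ := ih
    refine ⟨w.concat hyz.1, fun z hz => ?_⟩
    rw [Walk.support_concat, List.mem_append, List.mem_singleton] at hz
    exact hz.elim (hw z) (· ▸ hyz.2)

namespace Walk

variable {V : Type*} {G : SimpleGraph V} {f : V → ℤ} {a b : ℤ}

lemma getLast?_support {u v : V} (p : G.Walk u v) : p.support.getLast? = some v := by
  rw [List.getLast?_eq_some_getLast p.support_ne_nil, getLast_support]

lemma exists_shortest_walk_support_subset {u v : V} (w : G.Walk u v) (hu : f u ≤ a)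
    (hv : b ≤ f v) :
    ∃ (x y : V) (p : G.Walk x y), p.support ⊆ w.support ∧ f x ≤ a ∧ b ≤ f y ∧
      ∀ (x' y' : V) (p' : G.Walk x' y'), p'.support ⊆ p.support → f x' ≤ a → b ≤ f y' →
        p.length ≤ p'.length := by
  classical
  have hex : ∃ k, ∃ (x y : V) (p : G.Walk x y), p.length = k ∧ p.support ⊆ w.support ∧
      f x ≤ a ∧ b ≤ f y := ⟨_, u, v, w, rfl, List.Subset.refl _, hu, hv⟩
  obtain ⟨x, y, p, hlen, hsub, hx, hy⟩ := Nat.find_spec hex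
  refine ⟨x, y, p, hsub, hx, hy, fun x' y' p' hsub' hx' hy' => ?_⟩
  rw [hlen]
  exact Nat.find_min' hex ⟨x', y', p', rfl, fun _ h => hsub (hsub' h), hx', hy'⟩

/-- A shortest walk from `{f ≤ a}` to `{b ≤ f}` through the vertices of `w` is the crossing;
`f` changes by at most one along an edge, so its end values are exactly `a` and `b`. -/
theorem exists_slab_crossing (hf : ∀ x y, G.Adj x y → f y ≤ f x + 1) (hab : a ≤ b)
    {u v : V} (w : G.Walk u v) (hu : f u ≤ a) (hv : b ≤ f v) :
    ∃ J : List V, J ≠ [] ∧ J.Nodup ∧ J.IsChain G.Adj ∧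
      (∀ k ∈ J, k ∈ w.support ∧ a ≤ f k ∧ f k ≤ b) ∧
      (∀ k ∈ J, f k = a ↔ J.head? = some k) ∧ (∀ k ∈ J, f k = b ↔ J.getLast? = some k) := by
  classical
  obtain ⟨x, y, p, hsub, hx, hy, hmin⟩ := w.exists_shortest_walk_support_subset hu hv
  have hsplit {z : V} (hz : z ∈ p.support) :
      (p.takeUntil z hz).length + (p.dropUntil z hz).length = p.length := by
    rw [← length_append, p.take_spec hz]
  have hstart {z : V} (hz : z ∈ p.support) (hza : f z ≤ a) : z = x := by
    have := hmin _ _ _ (p.support_dropUntil_subset_support hz) hza hy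
    have := hsplit hz
    exact (eq_of_length_eq_zero (p := p.takeUntil z hz) (by omega)).symm
  have hend {z : V} (hz : z ∈ p.support) (hzb : b ≤ f z) : z = y := by
    have := hmin _ _ _ (p.support_takeUntil_subset_support hz) hx hzb
    have := hsplit hz
    exact eq_of_length_eq_zero (p := p.dropUntil z hz) (by omega)
  have hpath : p.IsPath := by
    rw [← p.bypass_eq_self_of_length_le_length_bypass
      (hmin _ _ _ p.support_bypass_subset_support hx hy)]
    exact p.bypass_isPath
  have hends : f x = a ∧ f y = b := by
    by_cases hnil : p.Nil
    · obtain rfl := hnil.eq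
      omega
    · have h₁ := hf _ _ (adj_snd hnil)
      have h₂ := hf _ _ (adj_penultimate hnil)
      have h₃ : ¬ f p.snd ≤ a :=
        mt (hstart (p.getVert_mem_support 1 : p.snd ∈ p.support)) (adj_snd hnil).ne'
      have h₄ : ¬ b ≤ f p.penultimate :=
        mt (hend (p.getVert_mem_support _ : p.penultimate ∈ p.support)) (adj_penultimate hnil).ne
      omega
  refine ⟨p.support, p.support_ne_nil, hpath.support_nodup, p.isChain_adj_support,
    fun k hk => ⟨hsub hk, ?_, ?_⟩, fun k hk => ?_, fun k hk => ?_⟩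
  · by_contra! h
    rw [hstart hk h.le] at h
    omega
  · by_contra! h
    rw [hend hk h.le] at h
    omega
  · rw [← cons_tail_support, List.head?_cons, Option.some_inj]
    exact ⟨fun h => (hstart hk h.le).symm, fun h => h ▸ hends.1⟩
  · rw [getLast?_support, Option.some_inj]
    exact ⟨fun h => (hend hk h.ge).symm, fun h => h ▸ hends.2⟩

end Walk

end SimpleGraph

lemma Function.not_forall_iterate_mem {α : Type*} {f : α → α} {S T : Set α} (hT : T.Finite)
    (hf : S.InjOn f) (hTS : T ⊆ S) {x y : α} (hyx : f y = x) (hy : y ∈ S) (hyT : y ∉ T) :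
    ¬ ∀ i, f^[i] x ∈ T := by
  intro hx
  obtain ⟨a, b, hab, h⟩ := hT.exists_lt_map_eq_of_forall_mem hx
  induction a generalizing b with
  | zero =>
    obtain ⟨b, rfl⟩ := Nat.exists_eq_add_of_lt hab
    rw [zero_add, iterate_zero_apply, iterate_succ_apply'] at h
    exact hyT (hf hy (hTS (hx b)) (hyx.trans h) ▸ hx b)
  | succ a ih =>
    obtain ⟨b, rfl⟩ := Nat.exists_eq_add_of_lt hab
    rw [iterate_succ_apply', show a + 1 + b + 1 = a + b + 1 + 1 by omega,
      iterate_succ_apply'] at h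
    exact ih (a + b + 1) (by omega) (hf (hTS (hx _)) (hTS (hx _)) h)

section InterfaceWalk

variable (occ : ℤ × ℤ → Prop) [DecidablePred occ]

def rotR (v : ℤ × ℤ) : ℤ × ℤ := (v.2, -v.1)

lemma rotR_neg (v : ℤ × ℤ) : rotR (-v) = -rotR v := rfl

lemma rotR_rotR (v : ℤ × ℤ) : rotR (rotR v) = -v := rfl

/-- A state `(p, q)` is the edge between the square `p` on the left and the square `q` on the
right, traversed in direction `d = rotR (p - q)`; the walk turns left, goes straight or turns
right according to which of the two squares ahead, `p + d` and `q + d`, is occupied. -/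
def interfaceStep (s : (ℤ × ℤ) × (ℤ × ℤ)) : (ℤ × ℤ) × (ℤ × ℤ) :=
  let d := rotR (s.1 - s.2)
  if occ (s.1 + d) then (s.1, s.1 + d)
  else if occ (s.2 + d) then (s.1 + d, s.2 + d)
  else (s.2 + d, s.2)

def interfaceUnstep (s : (ℤ × ℤ) × (ℤ × ℤ)) : (ℤ × ℤ) × (ℤ × ℤ) :=
  let d := rotR (s.1 - s.2)
  if occ (s.1 - d) then (s.1, s.1 - d)
  else if occ (s.2 - d) then (s.1 - d, s.2 - d)
  else (s.2 - d, s.2)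

lemma interfaceUnstep_step {s : (ℤ × ℤ) × (ℤ × ℤ)} (hq : occ s.2) (hp : ¬ occ s.1) :
    interfaceUnstep occ (interfaceStep occ s) = s := by
  obtain ⟨p, q⟩ := s
  dsimp only [interfaceStep] at hp hq ⊢
  split_ifs with h₁ h₂ <;> simp [interfaceUnstep, rotR_neg, rotR_rotR, add_comm _ p, *]

lemma interfaceStep_injOn : Set.InjOn (interfaceStep occ) {s | occ s.2 ∧ ¬ occ s.1} :=
  Set.LeftInvOn.injOn fun _ hs => interfaceUnstep_step occ hs.1 hs.2

end InterfaceWalk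

section Padding

variable (m n : ℤ) (ω : ℤ × ℤ → Bool)

def paddedOcc (k : ℤ × ℤ) : Prop := 1 ≤ k.2 ∧ k.2 ≤ n ∧ k.1 ≤ m ∧ (k.1 ≤ 0 ∨ ω k = true)

instance : DecidablePred (paddedOcc m n ω) := fun _ => by unfold paddedOcc; infer_instance

def vacantBox : Set (ℤ × ℤ) :=
  {k | ¬ paddedOcc m n ω k ∧ 0 ≤ k.1 ∧ k.1 ≤ m ∧ 1 ≤ k.2 ∧ k.2 ≤ n + 1}

def IsGoodInterface (s : (ℤ × ℤ) × (ℤ × ℤ)) : Prop :=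
  plusAdj s.1 s.2 ∧ s.1 ∈ vacantBox m n ω ∧ paddedOcc m n ω s.2 ∧
    Relation.ReflTransGen (fun x y => plusAdj x y ∧ y ∈ vacantBox m n ω) (0, n + 1) s.1 ∧
    Relation.ReflTransGen (fun x y => starAdj x y ∧ paddedOcc m n ω y) (0, n) s.2

variable {m n ω}

lemma paddedOcc.bounds {k : ℤ × ℤ} (h : paddedOcc m n ω k) : 1 ≤ k.2 ∧ k.2 ≤ n ∧ k.1 ≤ m :=
  ⟨h.1, h.2.1, h.2.2.1⟩

lemma off_wall_of_not_paddedOcc {k : ℤ × ℤ} (h : ¬ paddedOcc m n ω k) :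
    0 < k.1 ∨ m < k.1 ∨ k.2 < 1 ∨ n < k.2 := by
  by_contra! h'
  exact h ⟨h'.2.2.1, h'.2.2.2, h'.2.1, Or.inl h'.1⟩
lemma isGoodInterface_step {s : (ℤ × ℤ) × (ℤ × ℤ)} (hs : IsGoodInterface m n ω s)
    (hq : s.2.1 < m) (hp : 1 < s.1.2) :
    IsGoodInterface m n ω (interfaceStep (paddedOcc m n ω) s) := by
  obtain ⟨⟨p₁, p₂⟩, ⟨q₁, q₂⟩⟩ := s
  obtain ⟨hpq, ⟨hpO, hpV⟩, hqO, hpR, hqR⟩ := hs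
  have hqB := hqO.bounds
  rw [plusAdj_iff] at hpq
  dsimp only [interfaceStep]
  split_ifs with h₁ h₂ <;> simp only [rotR, Prod.mk_add_mk, Prod.mk_sub_mk] at *
  · refine ⟨?_, ⟨hpO, hpV⟩, h₁, hpR, hqR.tail ⟨?_, h₁⟩⟩ <;>
      simp only [plusAdj_iff, starAdj_iff] <;> omega
  · have := h₂.bounds
    have := off_wall_of_not_paddedOcc h₁
    have hV : (p₁ + (p₂ - q₂), p₂ + -(p₁ - q₁)) ∈ vacantBox m n ω := ⟨h₁, by omega⟩
    refine ⟨?_, hV, h₂, hpR.tail ⟨?_, hV⟩, hqR.tail ⟨?_, h₂⟩⟩ <;>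
      simp only [plusAdj_iff, starAdj_iff] <;> omega
  · have := off_wall_of_not_paddedOcc h₁
    have := off_wall_of_not_paddedOcc h₂
    have hV₁ : (p₁ + (p₂ - q₂), p₂ + -(p₁ - q₁)) ∈ vacantBox m n ω := ⟨h₁, by omega⟩
    have hV₂ : (q₁ + (p₂ - q₂), q₂ + -(p₁ - q₁)) ∈ vacantBox m n ω := ⟨h₂, by omega⟩
    refine ⟨?_, hV₂, hqO, (hpR.tail ⟨?_, hV₁⟩).tail ⟨?_, hV₂⟩, hqR⟩ <;>
      simp only [plusAdj_iff] <;> omega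

lemma isGoodInterface_start (hm : 0 ≤ m) (hn : 1 ≤ n) :
    IsGoodInterface m n ω ((0, n + 1), (0, n)) := by
  refine ⟨?_, ⟨fun h => ?_, ?_⟩, ⟨hn, le_rfl, hm, Or.inl le_rfl⟩, .refl, .refl⟩
  · rw [plusAdj_iff]; dsimp only; omega
  · have := h.bounds; dsimp only at this; omega
  · dsimp only; omega

lemma interfaceStep_eq_start (hm : 0 ≤ m) (hn : 1 ≤ n) :
    interfaceStep (paddedOcc m n ω) ((-1, n + 1), (-1, n)) = ((0, n + 1), (0, n)) := by
  simp [interfaceStep, rotR, paddedOcc, hm, hn]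

lemma setOf_isGoodInterface_finite : {s | IsGoodInterface m n ω s}.Finite := by
  refine ((Set.finite_Icc ((0 : ℤ), (1 : ℤ)) (m, n + 1)).prod
    (Set.finite_Icc ((-1 : ℤ), (0 : ℤ)) (m + 1, n + 2))).subset ?_
  rintro ⟨⟨p₁, p₂⟩, ⟨q₁, q₂⟩⟩ ⟨hpq, ⟨-, hpV⟩, -⟩
  rw [plusAdj_iff] at hpq
  simp only [Set.mem_prod, Set.mem_Icc, Prod.mk_le_mk] at *
  omega

lemma exists_occupied_star_LR_of_reach (hm : 1 ≤ m) (hn : 1 ≤ n) {q : ℤ × ℤ}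
    (hq : Relation.ReflTransGen (fun x y => starAdj x y ∧ paddedOcc m n ω y) (0, n) q)
    (hqm : m ≤ q.1) :
    ∃ J : List (ℤ × ℤ), IsLRCrossing starAdj m n J ∧ ∀ k ∈ J, ω k = true := by
  obtain ⟨w, hw⟩ := SimpleGraph.exists_walk_support_subset_of_reflTransGen (G := starGraph)
    (S := {k | paddedOcc m n ω k}) ⟨hn, le_rfl, by omega, Or.inl le_rfl⟩ hq
  obtain ⟨J, hne, hnd, hchain, hmem, hhead, hlast⟩ :=
    w.exists_slab_crossing (f := Prod.fst) (fun x y h => by have := starAdj_iff.mp h; omega)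
      hm (by simp) hqm
  have hJ (k) (hk : k ∈ J) : inRect m n k ∧ ω k = true := by
    obtain ⟨hkw, hk₁, hk₂⟩ := hmem k hk
    have hkO : paddedOcc m n ω k := hw k hkw
    exact ⟨⟨hk₁, hk₂, hkO.1, hkO.2.1⟩, hkO.2.2.2.resolve_left (by omega)⟩
  exact ⟨J, ⟨hne, hnd, hchain, fun k hk => (hJ k hk).1, hhead, hlast⟩, fun k hk => (hJ k hk).2⟩

lemma exists_vacant_plus_TD_of_reach (hm : 0 ≤ m) (hn : 1 ≤ n) {p : ℤ × ℤ}
    (hp : Relation.ReflTransGen (fun x y => plusAdj x y ∧ y ∈ vacantBox m n ω) (0, n + 1) p)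
    (hp₁ : p.2 ≤ 1) :
    ∃ J : List (ℤ × ℤ), IsTDCrossing plusAdj m n J ∧ ∀ k ∈ J, ω k = false := by
  obtain ⟨w, hw⟩ := SimpleGraph.exists_walk_support_subset_of_reflTransGen (G := plusGraph)
    ((isGoodInterface_start (ω := ω) hm hn).2.1) hp
  obtain ⟨J, hne, hnd, hchain, hmem, hhead, hlast⟩ :=
    w.exists_slab_crossing (f := fun k => -k.2) (a := -n) (b := -1)
      (fun x y h => by have := plusAdj_iff.mp h; omega) (by omega) (by simp) (by simpa)
  simp only [neg_inj] at hhead hlast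
  have hJ (k) (hk : k ∈ J) : inRect m n k ∧ ω k = false := by
    obtain ⟨hkw, hk₁, hk₂⟩ := hmem k hk
    obtain ⟨hkO, hkV⟩ := hw k hkw
    have := off_wall_of_not_paddedOcc hkO
    refine ⟨⟨by omega, hkV.2.1, by omega, by omega⟩, ?_⟩
    simpa using fun hω => hkO ⟨by omega, by omega, hkV.2.1, Or.inr hω⟩
  exact ⟨J, ⟨hne, hnd, hchain, fun k hk => (hJ k hk).1, hhead, hlast⟩, fun k hk => (hJ k hk).2⟩

end Padding

/-- If `Λ` contains no occupied star connected left-right crossing, then it contains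
a vacant plus connected top-down crossing. -/
theorem vacant_plus_TD_of_no_occupied_star_LR
    (m n : ℤ) (hm : 1 ≤ m) (hn : 1 ≤ n) (ω : ℤ × ℤ → Bool)
    (h : ¬ ∃ J : List (ℤ × ℤ), IsLRCrossing starAdj m n J ∧ ∀ k ∈ J, ω k = true) :
    ∃ J : List (ℤ × ℤ), IsTDCrossing plusAdj m n J ∧ ∀ k ∈ J, ω k = false := by
  by_contra hTD
  have hgood (i : ℕ) : IsGoodInterface m n ω
      ((interfaceStep (paddedOcc m n ω))^[i] ((0, n + 1), (0, n))) := by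
    induction i with
    | zero => exact isGoodInterface_start (by omega) hn
    | succ i ih =>
      rw [Function.iterate_succ_apply']
      refine isGoodInterface_step ih ?_ ?_
      · by_contra! hq
        exact h (exists_occupied_star_LR_of_reach hm hn ih.2.2.2.2 hq)
      · by_contra! hp
        exact hTD (exists_vacant_plus_TD_of_reach (by omega) hn ih.2.2.2.1 hp)
  exact Function.not_forall_iterate_mem setOf_isGoodInterface_finite (interfaceStep_injOn _)
    (fun s hs => ⟨hs.2.2.1, hs.2.1.1⟩) (interfaceStep_eq_start (by omega) hn)
    (by norm_num [paddedOcc]; omega) (fun hy => by norm_num [IsGoodInterface, vacantBox] at hy)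
    hgood
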